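/- arXiv:1002.4451 — 4 statements merged into one kernel-verified Lean document; each statement's English description precedes it below -/
import Mathlib

section
/- Let E be a finite-dimensional real inner product space and let w : ι → E be a finite family of vectors such that for every vector v ∈ E the sum of those w i with ⟨w i, v⟩ > 0 equals zero (i.e., ∑_{i : ⟨w i, v⟩ > 0} w i = 0). Then w i = 0 for every i. -/
theorem inner_sum_filter_inner_pos_pos {E ι : Type*} [NormedAddCommGroup E]
    [InnerProductSpace ℝ E] {s : Finset ι} (w : ι → E) (v : E) {i : ι} (hi : i ∈ s)
    (hpos : 0 < inner ℝ (w i) v) :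
    0 < inner ℝ (∑ j ∈ s.filter (fun j => 0 < inner ℝ (w j) v), w j) v := by
  rw [sum_inner]
  exact Finset.sum_pos (fun j hj => (Finset.mem_filter.mp hj).2)
    ⟨i, Finset.mem_filter.mpr ⟨hi, hpos⟩⟩

open Finset in
theorem stmt1_general {E : Type*} [NormedAddCommGroup E] [InnerProductSpace ℝ E]
    {ι : Type*} [Fintype ι] (w : ι → E)
    (h : ∀ v : E,
      ∑ i ∈ Finset.univ.filter (fun i => 0 < (inner ℝ (w i) v : ℝ)), w i = 0) :
    ∀ i, w i = 0 := by
  intro i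
  by_contra hne
  have hpos := inner_sum_filter_inner_pos_pos w (w i) (mem_univ i) (real_inner_self_pos.mpr hne)
  rw [h (w i), inner_zero_left] at hpos
  exact hpos.false

open Finset in
/-- If a finite family of vectors in a finite-dimensional real inner product space has
the property that for every vector `v` the sum of the members pairing strictly
positively with `v` vanishes, then all members of the family are zero. -/
theorem stmt1 {E : Type*} [NormedAddCommGroup E] [InnerProductSpace ℝ E]
    [FiniteDimensional ℝ E] {ι : Type*} [Fintype ι] (w : ι → E)
    (h : ∀ v : E,
      ∑ i ∈ Finset.univ.filter (fun i => 0 < (inner ℝ (w i) v : ℝ)), w i = 0) :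
    ∀ i, w i = 0 :=
  stmt1_general w h
end

section
/- Let n ≥ 1 and let Ω ⊆ ℝⁿ be a compact convex set with nonempty interior. Then there exists a constant c > 0 such that for every real r ≥ 1 and every ε with 0 < ε ≤ 1, the Lebesgue volume of the open ε-neighborhood of the topological boundary of the dilate r·Ω = {r·x : x ∈ Ω} is at most c·(ε/r) times the Lebesgue volume of r·Ω. -/
/-!
Pick a ball `B(x₀, δ) ⊆ K` in a convex body `K`, and let `H(a)` be the image of `K` under the
homothety of centre `x₀` and ratio `a`. With `t = ε / δ`, convexity gives
`thickening ε K ⊆ H(1 + t)` and, for `t ≤ 1`, `thickening ε H(1 - t) ⊆ K`, so the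
`ε`-neighbourhood of `∂K` lies in the shell `H(1 + t) \ H(1 - t)`, of volume
`((1 + t)ⁿ - (1 - t)ⁿ) vol K ≤ 2n t (1 + t)ⁿ⁻¹ vol K`. For `K = r • Ω` the inner radius is `r δ`,
so `t = ε / (r δ) ≤ 1 / δ`, and the bound is `O(ε / r) vol (r • Ω)`.
-/

open scoped Pointwise ENNReal
open MeasureTheory Metric Set Module AffineMap

theorem one_add_pow_sub_one_sub_pow_le (n : ℕ) {t : ℝ} (ht : 0 ≤ t) :
    (1 + t) ^ n - (1 - t) ^ n ≤ 2 * n * t * (1 + t) ^ (n - 1) := by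
  have hmax : max |1 + t| |1 - t| = 1 + t := by
    rw [abs_of_nonneg (by linarith), max_eq_left (abs_sub_le_iff.2 ⟨by linarith, by linarith⟩)]
  calc (1 + t) ^ n - (1 - t) ^ n ≤ |(1 + t) ^ n - (1 - t) ^ n| := le_abs_self _
    _ ≤ |1 + t - (1 - t)| * n * max |1 + t| |1 - t| ^ (n - 1) := abs_pow_sub_pow_le ..
    _ = 2 * n * t * (1 + t) ^ (n - 1) := by
      rw [hmax, show 1 + t - (1 - t) = 2 * t by ring, abs_of_nonneg (by positivity)]
      ring

theorem one_add_pow_le_of_one_le {n : ℕ} (hn : n ≠ 0) {t : ℝ} (ht : 1 ≤ t) :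
    (1 + t) ^ n ≤ 2 * n * t * (1 + t) ^ (n - 1) := by
  have hn1 : (1 : ℝ) ≤ n := Nat.one_le_cast.2 (Nat.one_le_iff_ne_zero.2 hn)
  calc (1 + t) ^ n = (1 + t) * (1 + t) ^ (n - 1) := by
        rw [← pow_succ', Nat.sub_add_cancel (Nat.one_le_iff_ne_zero.2 hn)]
    _ ≤ 2 * n * t * (1 + t) ^ (n - 1) := by gcongr; nlinarith

section Homothety

variable {E : Type*} [NormedAddCommGroup E] [NormedSpace ℝ E] {K : Set E} {x₀ : E} {δ ε : ℝ}

theorem Convex.thickening_subset_image_homothety (hK : Convex ℝ K) (hball : ball x₀ δ ⊆ K)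
    (hδ : 0 < δ) (hε : 0 < ε) :
    Metric.thickening ε K ⊆ homothety x₀ (1 + ε / δ) '' K := by
  intro y hy
  obtain ⟨z, hz, hyz⟩ := mem_thickening_iff.1 hy
  set t := ε / δ with ht_def
  have ht : 0 < t := div_pos hε hδ
  have hw : x₀ + t⁻¹ • (y - z) ∈ K := hball <| by
    rw [mem_ball, dist_eq_norm, add_sub_cancel_left, norm_smul,
      Real.norm_of_nonneg (inv_nonneg.2 ht.le), ← dist_eq_norm]
    calc t⁻¹ * dist y z < t⁻¹ * ε := by gcongr
      _ = δ := by rw [ht_def]; field_simp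
  refine ⟨(1 + t)⁻¹ • z + (t / (1 + t)) • (x₀ + t⁻¹ • (y - z)),
    hK hz hw (by positivity) (by positivity) (by field_simp), ?_⟩
  simp only [homothety_apply, vsub_eq_sub, vadd_eq_add]
  match_scalars <;> field_simp <;> ring

theorem Convex.thickening_frontier_subset_image_homothety (hK : Convex ℝ K)
    (hball : ball x₀ δ ⊆ K) (hδ : 0 < δ) (hε : 0 < ε) :
    Metric.thickening ε (frontier K) ⊆ homothety x₀ (1 + ε / δ) '' K :=
  (thickening_subset_of_subset ε frontier_subset_closure).trans <|
    (thickening_closure (s := K)).subset.trans (hK.thickening_subset_image_homothety hball hδ hε)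

theorem Convex.thickening_image_homothety_subset (hK : Convex ℝ K) (hball : ball x₀ δ ⊆ K)
    (hε : 0 < ε) (hεδ : ε ≤ δ) :
    Metric.thickening ε (homothety x₀ (1 - ε / δ) '' K) ⊆ K := by
  intro p hp
  obtain ⟨_, ⟨z, hz, rfl⟩, hpq⟩ := mem_thickening_iff.1 hp
  set t := ε / δ with ht_def
  have ht : 0 < t := div_pos hε (hε.trans_le hεδ)
  have ht1 : t ≤ 1 := div_le_one_of_le₀ hεδ (hε.le.trans hεδ)
  have hw : x₀ + t⁻¹ • (p - homothety x₀ (1 - t) z) ∈ K := hball <| by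
    rw [mem_ball, dist_eq_norm, add_sub_cancel_left, norm_smul,
      Real.norm_of_nonneg (inv_nonneg.2 ht.le), ← dist_eq_norm]
    calc t⁻¹ * dist p (homothety x₀ (1 - t) z) < t⁻¹ * ε := by gcongr
      _ = δ := by rw [ht_def]; field_simp
  have hcomb : (1 - t) • z + t • (x₀ + t⁻¹ • (p - homothety x₀ (1 - t) z)) ∈ K :=
    hK hz hw (by linarith) ht.le (by ring)
  convert hcomb using 1
  simp only [homothety_apply, vsub_eq_sub, vadd_eq_add]
  match_scalars <;> field_simp <;> ring

theorem Convex.disjoint_thickening_frontier_image_homothety (hK : Convex ℝ K)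
    (hball : ball x₀ δ ⊆ K) (hε : 0 < ε) (hεδ : ε ≤ δ) :
    Disjoint (Metric.thickening ε (frontier K)) (homothety x₀ (1 - ε / δ) '' K) := by
  rw [Set.disjoint_right]
  intro y hy hthick
  obtain ⟨p, hp, hyp⟩ := mem_thickening_iff.1 hthick
  have hint : Metric.thickening ε (homothety x₀ (1 - ε / δ) '' K) ⊆ interior K :=
    interior_maximal (hK.thickening_image_homothety_subset hball hε hεδ) isOpen_thickening
  exact hp.2 (hint (mem_thickening_iff.2 ⟨y, hy, by rwa [dist_comm]⟩))

end Homothety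

section Volume

variable {E : Type*} [NormedAddCommGroup E] [NormedSpace ℝ E] [MeasurableSpace E] [BorelSpace E]
  [FiniteDimensional ℝ E] (μ : Measure E) [μ.IsAddHaarMeasure] {K : Set E} {x₀ : E} {δ ε : ℝ}

theorem Convex.addHaar_thickening_frontier_le_sub_pow (hK : Convex ℝ K)
    (hKb : Bornology.IsBounded K) (hball : ball x₀ δ ⊆ K) (hε : 0 < ε) (hεδ : ε ≤ δ) :
    μ (Metric.thickening ε (frontier K)) ≤
      ENNReal.ofReal ((1 + ε / δ) ^ finrank ℝ E - (1 - ε / δ) ^ finrank ℝ E) * μ K := by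
  have hδ : 0 < δ := hε.trans_le hεδ
  have ht1 : 0 ≤ 1 - ε / δ := sub_nonneg.2 (div_le_one_of_le₀ hεδ hδ.le)
  set core := homothety x₀ (1 - ε / δ) '' K
  set hull := homothety x₀ (1 + ε / δ) '' K
  have hcore : core ⊆ hull :=
    (self_subset_thickening hε _).trans <|
      (hK.thickening_image_homothety_subset hball hε hεδ).trans <|
        (self_subset_thickening hε _).trans (hK.thickening_subset_image_homothety hball hδ hε)
  have hsum : μ (Metric.thickening ε (frontier K)) + μ core ≤ μ hull := by
    rw [← measure_union' (hK.disjoint_thickening_frontier_image_homothety hball hε hεδ)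
      isOpen_thickening.measurableSet]
    exact measure_mono <|
      union_subset (hK.thickening_frontier_subset_image_homothety hball hδ hε) hcore
  have hfin : μ core ≠ ∞ := by
    simp only [core, Measure.addHaar_image_homothety]
    exact ENNReal.mul_ne_top ENNReal.ofReal_ne_top hKb.measure_lt_top.ne
  calc μ (Metric.thickening ε (frontier K))
      ≤ μ hull - μ core := ENNReal.le_sub_of_add_le_right hfin hsum
    _ = _ := by
      simp only [core, hull, Measure.addHaar_image_homothety]
      rw [abs_of_nonneg (by positivity), abs_of_nonneg (by positivity),
        ← ENNReal.sub_mul (fun _ _ => hKb.measure_lt_top.ne),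
        ← ENNReal.ofReal_sub _ (by positivity)]

theorem Convex.addHaar_thickening_frontier_le (hK : Convex ℝ K) (hKb : Bornology.IsBounded K)
    (hE : finrank ℝ E ≠ 0) (hball : ball x₀ δ ⊆ K) (hδ : 0 < δ) (hε : 0 < ε) :
    μ (Metric.thickening ε (frontier K)) ≤ ENNReal.ofReal
      (2 * finrank ℝ E * (ε / δ) * (1 + ε / δ) ^ (finrank ℝ E - 1)) * μ K := by
  rcases le_total ε δ with hεδ | hδε
  · refine (hK.addHaar_thickening_frontier_le_sub_pow μ hKb hball hε hεδ).trans ?_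
    gcongr
    exact one_add_pow_sub_one_sub_pow_le _ (by positivity)
  · calc μ (Metric.thickening ε (frontier K))
        ≤ μ (homothety x₀ (1 + ε / δ) '' K) :=
          measure_mono (hK.thickening_frontier_subset_image_homothety hball hδ hε)
      _ ≤ _ := by
        rw [Measure.addHaar_image_homothety, abs_of_nonneg (by positivity)]
        gcongr
        exact one_add_pow_le_of_one_le hE ((one_le_div₀ hδ).2 hδε)

end Volume

/-- For a compact convex set `Ω ⊆ ℝⁿ` with nonempty interior there is `c > 0` such
that for all `r ≥ 1` and `0 < ε ≤ 1`, the volume of the open `ε`-neighborhood of the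
boundary of the dilate `r • Ω` is at most `c · (ε / r)` times the volume of `r • Ω`. -/
theorem stmt3 (n : ℕ) (hn : 1 ≤ n) (Ω : Set (EuclideanSpace ℝ (Fin n)))
    (hcomp : IsCompact Ω) (hconv : Convex ℝ Ω) (hint : (interior Ω).Nonempty) :
    ∃ c : ℝ, 0 < c ∧ ∀ r : ℝ, 1 ≤ r → ∀ ε : ℝ, 0 < ε → ε ≤ 1 →
      MeasureTheory.volume (Metric.thickening ε (frontier (r • Ω))) ≤
        ENNReal.ofReal (c * (ε / r)) * MeasureTheory.volume (r • Ω) := by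
  obtain ⟨x₀, δ, hδ, hball⟩ : ∃ x₀ δ, 0 < δ ∧ ball x₀ δ ⊆ Ω := by
    obtain ⟨x₀, hx₀⟩ := hint
    obtain ⟨δ, hδ, h⟩ := Metric.isOpen_iff.1 isOpen_interior x₀ hx₀
    exact ⟨x₀, δ, hδ, h.trans interior_subset⟩
  have hn0 : (0 : ℝ) < n := Nat.cast_pos.2 hn
  refine ⟨2 * n * (1 + δ⁻¹) ^ (n - 1) / δ, by positivity, fun r hr ε hε hε1 => ?_⟩
  have hr0 : 0 < r := one_pos.trans_le hr
  have hrball : ball (r • x₀) (r * δ) ⊆ r • Ω := by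
    have := _root_.smul_ball hr0.ne' x₀ δ
    rw [Real.norm_of_nonneg hr0.le] at this
    exact this ▸ smul_set_mono hball
  have ht : ε / (r * δ) ≤ δ⁻¹ := by
    rw [div_le_iff₀ (by positivity), inv_mul_eq_div, le_div_iff₀ hδ]
    nlinarith
  refine ((hconv.smul r).addHaar_thickening_frontier_le volume (hcomp.isBounded.smul₀ r)
    (by rw [finrank_euclideanSpace_fin]; omega) hrball (by positivity) hε).trans ?_
  rw [finrank_euclideanSpace_fin]
  gcongr ENNReal.ofReal ?_ * _
  calc 2 * n * (ε / (r * δ)) * (1 + ε / (r * δ)) ^ (n - 1)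
      ≤ 2 * n * (ε / (r * δ)) * (1 + δ⁻¹) ^ (n - 1) := by gcongr
    _ = 2 * n * (1 + δ⁻¹) ^ (n - 1) / δ * (ε / r) := by field_simp
end

section
/- Let A be a 3×3 matrix with integer entries and determinant 1, and suppose its characteristic polynomial, viewed over ℝ, factors as (X − λ)²·(X − μ) with λ, μ real and λ ≠ μ. Then λ = −1 and μ = 1. -/
/-!
Write the characteristic polynomial as `p = X³ + aX² + bX + c` with `a, b, c ∈ ℤ` and
`c = -det A = -1`. The double root `λ` is also a root of `p'`, hence of the linear remainder of `p`
modulo `p'`. That remainder has rational coefficients and leading coefficient proportional to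
`(λ - μ)² ≠ 0`, so `λ` is rational. A rational root of a monic integer polynomial is an integer
dividing the constant term, so `λ = ±1`; then `λ²μ = 1` forces `μ = 1`, whence `λ = -1`.
-/

open Polynomial

lemma coeff_X_sub_C_sq_mul_X_sub_C {R : Type*} [CommRing R] (l m : R) :
    ((X - C l) ^ 2 * (X - C m)).coeff 0 = -(l ^ 2 * m) ∧
    ((X - C l) ^ 2 * (X - C m)).coeff 1 = l ^ 2 + 2 * l * m ∧
    ((X - C l) ^ 2 * (X - C m)).coeff 2 = -(2 * l + m) := by
  have h : (X - C l) ^ 2 * (X - C m) =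
      X ^ 3 + C (-(2 * l + m)) * X ^ 2 + C (l ^ 2 + 2 * l * m) * X + C (-(l ^ 2 * m)) := by
    simp only [C_add, C_mul, C_neg, C_pow, C_ofNat]
    ring
  rw [h]
  refine ⟨?_, ?_, ?_⟩ <;>
    simp only [coeff_add, coeff_C_mul, coeff_X_pow, coeff_X, coeff_C] <;> norm_num

lemma exists_ratCast_eq_of_vieta {a b c : ℚ} {l m : ℝ} (hne : l ≠ m)
    (ha : (a : ℝ) = -(2 * l + m)) (hb : (b : ℝ) = l ^ 2 + 2 * l * m)
    (hc : (c : ℝ) = -(l ^ 2 * m)) :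
    ∃ q : ℚ, (q : ℝ) = l := by
  -- `(6b - 2a²) X - (ab - 9c)` is, up to the factor `1/9`, the remainder of `p` modulo `p'`.
  have hden : ((6 * b - 2 * a ^ 2 : ℚ) : ℝ) = -2 * (l - m) ^ 2 := by
    push_cast; rw [ha, hb]; ring
  have hnum : ((a * b - 9 * c : ℚ) : ℝ) = -2 * (l - m) ^ 2 * l := by
    push_cast; rw [ha, hb, hc]; ring
  have hden_ne : -2 * (l - m) ^ 2 ≠ 0 := by
    have := sub_ne_zero.mpr hne
    positivity
  refine ⟨(a * b - 9 * c) / (6 * b - 2 * a ^ 2), ?_⟩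
  rw [Rat.cast_div, hnum, hden, mul_div_cancel_left₀ _ hden_ne]

lemma eq_one_or_eq_neg_one_of_aeval_eq_zero {p : ℤ[X]} (hp : p.Monic)
    (h0 : IsUnit (p.coeff 0)) {q : ℚ} (hq : aeval q p = 0) : q = 1 ∨ q = -1 := by
  obtain ⟨k, rfl⟩ := isInteger_of_is_root_of_monic hp hq
  have hk : p.IsRoot k := by
    rwa [aeval_algebraMap_apply, map_eq_zero_iff _ (algebraMap ℤ ℚ).injective_int,
      coe_aeval_eq_eval] at hq
  rcases Int.isUnit_iff.mp (isUnit_of_dvd_unit hk.dvd_coeff_zero h0) with rfl | rfl <;> simp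

open Polynomial in
/-- If an integer `3 × 3` matrix of determinant `1` has real characteristic polynomial
`(X − λ)² (X − μ)` with `λ ≠ μ` real, then `λ = −1` and `μ = 1`. -/
theorem stmt6 (A : Matrix (Fin 3) (Fin 3) ℤ) (hdet : A.det = 1)
    (lam mu : ℝ) (hne : lam ≠ mu)
    (hchar : (A.map (Int.cast : ℤ → ℝ)).charpoly =
      (X - C lam) ^ 2 * (X - C mu)) :
    lam = -1 ∧ mu = 1 := by
  set p := A.charpoly
  have hmap : p.map (Int.castRingHom ℝ) = (X - C lam) ^ 2 * (X - C mu) := by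
    rw [← Matrix.charpoly_map]; exact hchar
  have hcoeff (k : ℕ) : ((p.coeff k : ℚ) : ℝ) = ((X - C lam) ^ 2 * (X - C mu)).coeff k := by
    rw [← hmap, coeff_map]; simp
  have hp0 : p.coeff 0 = -1 := by
    have := Matrix.det_eq_sign_charpoly_coeff A
    simp only [hdet, Fintype.card_fin] at this
    linarith
  obtain ⟨h0, h1, h2⟩ := coeff_X_sub_C_sq_mul_X_sub_C lam mu
  obtain ⟨q, rfl⟩ :=
    exists_ratCast_eq_of_vieta hne (hcoeff 2 ▸ h2) (hcoeff 1 ▸ h1) (hcoeff 0 ▸ h0)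
  have hroot : aeval q p = 0 := by
    apply (algebraMap ℚ ℝ).injective
    rw [← aeval_algebraMap_apply, aeval_def, eval₂_eq_eval_map, map_zero]
    have : algebraMap ℤ ℝ = Int.castRingHom ℝ := rfl
    rw [this, hmap]
    simp
  rw [← hcoeff 0, hp0] at h0
  rcases eq_one_or_eq_neg_one_of_aeval_eq_zero A.charpoly_monic (hp0 ▸ isUnit_one.neg) hroot
    with rfl | rfl
  · exact absurd (by simpa using h0) hne
  · exact ⟨by simp, by simpa using h0.symm⟩
end

section
/- Let E ⊆ ℝ be a set, let M > 0, and suppose that to every x ∈ E is assigned a closed interval I_x containing x with 0 < |I_x| ≤ M, where |I| denotes the length of I. Then there is a countable subset {x_k} of E such that the intervals I_{x_k} are pairwise strongly disjoint — meaning dist(I_{x_j}, I_{x_k}) ≥ (1/2)·max(|I_{x_j}|, |I_{x_k}|) for all j ≠ k — and ∑_k |I_{x_k}| ≥ (1/10)·μ*(E), where μ* denotes Lebesgue outer measure. -/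
/-!
Enlarge each interval `I_x = [a x, b x]` by half its length on both sides and apply the Vitali
covering lemma (with enlargement factor `2`) to the enlarged intervals. When two enlarged
intervals are disjoint, the originals are at distance more than half the sum of their lengths,
so they are strongly disjoint. Every `x ∈ E` lies in its enlarged interval, which meets the
enlarged interval of a selected `y` with `|I_x| ≤ 2 |I_y|`; hence `x` lies in the interval of
length `10 |I_y|` concentric with `I_y`.
-/

open MeasureTheory Set

section RealIntervals

variable {a b c d p q r s x : ℝ}

lemma Real.closedBall_subset_Icc_sub_add (hp : p ∈ Icc a b) :
    Metric.closedBall p r ⊆ Icc (a - r) (b + r) := by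
  rw [Real.closedBall_eq_Icc]
  exact Icc_subset_Icc (by linarith [hp.1]) (by linarith [hp.2])

lemma Real.add_lt_abs_sub_of_disjoint_Icc_sub_add (hr : 0 ≤ r) (hs : 0 ≤ s)
    (h : Disjoint (Icc (a - r) (b + r)) (Icc (c - s) (d + s)))
    (hp : p ∈ Icc a b) (hq : q ∈ Icc c d) : r + s < |p - q| := by
  rw [← Real.dist_eq, ← disjoint_closedBall_closedBall_iff hr hs]
  exact h.mono (closedBall_subset_Icc_sub_add hp) (closedBall_subset_Icc_sub_add hq)

lemma Real.mem_Icc_sub_add_of_inter_nonempty (hx : x ∈ Icc a b)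
    (h : (Icc a b ∩ Icc c d).Nonempty) : x ∈ Icc (c - (b - a)) (d + (b - a)) := by
  obtain ⟨z, ⟨hza, hzb⟩, hzc, hzd⟩ := h
  constructor <;> linarith [hx.1, hx.2]

end RealIntervals

lemma Real.volume_le_tsum_of_subset_biUnion_Icc {ι : Type*} {E : Set ℝ} {u : Set ι}
    (hu : u.Countable) {c d : ι → ℝ} (h : E ⊆ ⋃ i ∈ u, Icc (c i) (d i)) :
    volume E ≤ ∑' i : u, ENNReal.ofReal (d i - c i) :=
  calc volume E ≤ volume (⋃ i ∈ u, Icc (c i) (d i)) := measure_mono h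
    _ ≤ ∑' i : u, volume (Icc (c i) (d i)) := measure_biUnion_le _ hu _
    _ = ∑' i : u, ENNReal.ofReal (d i - c i) := by simp_rw [Real.volume_Icc]

theorem stmt8_general (E : Set ℝ) (M : ℝ) (a b : ℝ → ℝ)
    (hmem : ∀ x ∈ E, x ∈ Set.Icc (a x) (b x))
    (hlen : ∀ x ∈ E, 0 < b x - a x ∧ b x - a x ≤ M) :
    ∃ t : Set ℝ, t ⊆ E ∧ t.Countable ∧
      (∀ x ∈ t, ∀ y ∈ t, x ≠ y →
        ∀ p ∈ Set.Icc (a x) (b x), ∀ q ∈ Set.Icc (a y) (b y),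
          (1 / 2) * max (b x - a x) (b y - a y) ≤ |p - q|) ∧
      MeasureTheory.volume E / 10 ≤ ∑' x : t, ENNReal.ofReal (b x - a x) := by
  set L : ℝ → ℝ := fun x => b x - a x
  set B : ℝ → Set ℝ := fun x => Icc (a x - L x / 2) (b x + L x / 2)
  have hL : ∀ x ∈ E, 0 < L x := fun x hx => (hlen x hx).1
  have hB : ∀ x ∈ E, x ∈ B x := fun x hx => by
    constructor <;> linarith [(hmem x hx).1, (hmem x hx).2, hL x hx]
  obtain ⟨u, huE, hdisj, hcov⟩ := Vitali.exists_disjoint_subfamily_covering_enlargement B E L 2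
    one_lt_two (fun x hx => (hL x hx).le) M (fun x hx => (hlen x hx).2) (fun x hx => ⟨x, hB x hx⟩)
  have hu : u.Countable := hdisj.countable_of_nonempty_interior fun x hx => by
    simp only [B, interior_Icc, nonempty_Ioo]
    linarith [hL x (huE hx)]
  refine ⟨u, huE, hu, fun x hx y hy hxy p hp q hq => ?_, ?_⟩
  · have hgap := Real.add_lt_abs_sub_of_disjoint_Icc_sub_add (by linarith [hL x (huE hx)])
      (by linarith [hL y (huE hy)]) (hdisj hx hy hxy) hp hq
    linarith [max_le_add_of_nonneg (hL x (huE hx)).le (hL y (huE hy)).le]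
  · have hcover : E ⊆ ⋃ y ∈ u, Icc (a y - 9 / 2 * L y) (b y + 9 / 2 * L y) := fun x hx => by
      obtain ⟨y, hy, hne, hLxy⟩ := hcov x hx
      have hxy := Real.mem_Icc_sub_add_of_inter_nonempty (hB x hx) hne
      exact mem_iUnion₂.2 ⟨y, hy, by constructor <;> linarith [hxy.1, hxy.2]⟩
    rw [ENNReal.div_le_iff (by norm_num) (by norm_num), ← ENNReal.tsum_mul_right]
    refine (Real.volume_le_tsum_of_subset_biUnion_Icc hu hcover).trans_eq (tsum_congr fun y => ?_)
    rw [← ENNReal.ofReal_ofNat, ← ENNReal.ofReal_mul (by linarith [hL y (huE y.2)])]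
    congr 1
    ring

/-- Strongly-separated Vitali-type covering selection: if every point `x` of `E ⊆ ℝ`
lies in a closed interval `I_x = [a x, b x]` of positive length at most `M`, then one
can select a countable subset of `E` whose intervals are pairwise strongly disjoint
(any two are separated by at least half the larger length) and whose total length is
at least one tenth of the Lebesgue outer measure of `E`. -/
theorem stmt8 (E : Set ℝ) (M : ℝ) (hM : 0 < M) (a b : ℝ → ℝ)
    (hmem : ∀ x ∈ E, x ∈ Set.Icc (a x) (b x))
    (hlen : ∀ x ∈ E, 0 < b x - a x ∧ b x - a x ≤ M) :
    ∃ t : Set ℝ, t ⊆ E ∧ t.Countable ∧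
      (∀ x ∈ t, ∀ y ∈ t, x ≠ y →
        ∀ p ∈ Set.Icc (a x) (b x), ∀ q ∈ Set.Icc (a y) (b y),
          (1 / 2) * max (b x - a x) (b y - a y) ≤ |p - q|) ∧
      MeasureTheory.volume E / 10 ≤ ∑' x : t, ENNReal.ofReal (b x - a x) :=
  stmt8_general E M a b hmem hlen
end
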